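/- arXiv:1105.5060 — 2 statements merged into one kernel-verified Lean document; each statement's English description precedes it below -/
import Mathlib

section
/- Let k > 0, l > 0 and W > 0. Set h₁(x) = 2·arctan(exp(x)) and let p : [0,l] × [−W,W] → ℝ be defined by p(t,s) = (h₁(ks) − h₁(−kW)) / (h₁(kW) − h₁(−kW)). Then p(t,−W) = 0, p(t,W) = 1, the annulus A = [0,l] × [−W,W] with metric coefficient h(s) = cosh(ks) has area ∬_A cosh(ks) ds dt = (2l/k)·sinh(kW), and the energy of p equals ∬_A ( (∂_t p)²/cosh(ks) + cosh(ks)·(∂_s p)² ) ds dt = k·l / (h₁(kW) − h₁(−kW)). Hence on a cylinder of constant curvature −k² the annulus of constant width centered on the baseline attains the lower bound k·l/(h₁(W') − h₁(−W')) with W' = kW = arcsinh(k·area/(2l)), so this bound is sharp. -/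
open Real MeasureTheory Set

/-- `h₁ x = 2 · arctan (exp x)`, an antiderivative of `1 / cosh`. -/
noncomputable def h₁ (x : ℝ) : ℝ := 2 * Real.arctan (Real.exp x)

/-!
The test function depends on `s` alone and `h₁' = 1 / cosh`, so its energy density is
`(k / D)² / cosh (k s)` with `D = h₁ (k W) - h₁ (-k W)`. By Fubini both integrals over the
rectangle reduce to `l` times a one-variable integral in `s`, computed with the antiderivatives
`sinh (k s) / k` and `h₁ (k s) / k`; the second one equals `D / k`, which cancels one factor `D`.
-/

theorem hasDerivAt_h₁ (x : ℝ) : HasDerivAt h₁ (cosh x)⁻¹ x := by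
  refine (((hasDerivAt_arctan (exp x)).comp x (hasDerivAt_exp x)).const_mul 2).congr_deriv ?_
  rw [cosh_eq, exp_neg]
  field_simp
  ring

theorem hasDerivAt_h₁_comp_mul (k x : ℝ) :
    HasDerivAt (fun s => h₁ (k * s)) (k * (cosh (k * x))⁻¹) x :=
  ((hasDerivAt_h₁ (k * x)).comp x ((hasDerivAt_id' x).const_mul k)).congr_deriv (by ring)

theorem h₁_strictMono : StrictMono h₁ := fun _ _ hxy =>
  mul_lt_mul_of_pos_left (arctan_strictMono (exp_lt_exp.2 hxy)) two_pos

theorem integral_inv_cosh (a b : ℝ) : ∫ x in a..b, (cosh x)⁻¹ = h₁ b - h₁ a := by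
  have hcont : Continuous fun x => (cosh x)⁻¹ := continuous_cosh.inv₀ fun x => (cosh_pos x).ne'
  exact intervalIntegral.integral_eq_sub_of_hasDerivAt (fun x _ => hasDerivAt_h₁ x)
    (hcont.intervalIntegrable a b)

theorem integral_inv_cosh_mul {k : ℝ} (hk : k ≠ 0) (a b : ℝ) :
    ∫ s in a..b, (cosh (k * s))⁻¹ = (h₁ (k * b) - h₁ (k * a)) / k := by
  rw [intervalIntegral.integral_comp_mul_left (fun x => (cosh x)⁻¹) hk, integral_inv_cosh,
    smul_eq_mul, inv_mul_eq_div]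

theorem integral_cosh_mul {k : ℝ} (hk : k ≠ 0) (a b : ℝ) :
    ∫ s in a..b, cosh (k * s) = (sinh (k * b) - sinh (k * a)) / k := by
  rw [intervalIntegral.integral_comp_mul_left cosh hk,
    intervalIntegral.integral_eq_sub_of_hasDerivAt (fun x _ => hasDerivAt_sinh x)
      (continuous_cosh.intervalIntegrable _ _),
    smul_eq_mul, inv_mul_eq_div]

theorem setIntegral_Icc_prod_Icc_comp_snd {E : Type*} [NormedAddCommGroup E] [NormedSpace ℝ E]
    {a b c d : ℝ} (hab : a ≤ b) (hcd : c ≤ d) (g : ℝ → E) :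
    ∫ q in Icc a b ×ˢ Icc c d, g q.2 = (b - a) • ∫ s in c..d, g s := by
  rw [Measure.volume_eq_prod, ← Measure.prod_restrict, integral_fun_snd,
    intervalIntegral.integral_of_le hcd, integral_Icc_eq_integral_Ioc]
  simp [hab]

/-- on the cylinder of constant curvature `-k²` (Fermi metric
coefficient `cosh (k s)`), the annulus `A = [0,l] × [-W,W]` of constant width
centered on the baseline, together with the test function
`p (t,s) = (h₁ (k s) - h₁ (-k W)) / (h₁ (k W) - h₁ (-k W))`, satisfies:
`p = 0` on `s = -W`, `p = 1` on `s = W`, `area A = (2l/k)·sinh (k W)`, and the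
energy of `p` equals `k·l / (h₁ (k W) - h₁ (-k W))`, so the capacity lower
bound is sharp. -/
theorem capacity_lower_bound_sharp_negative_curvature
    (k l W : ℝ) (hk : 0 < k) (hl : 0 < l) (hW : 0 < W)
    (p : ℝ × ℝ → ℝ)
    (hp : ∀ t s : ℝ, p (t, s) = (h₁ (k * s) - h₁ (-(k * W))) / (h₁ (k * W) - h₁ (-(k * W))))
    (A : Set (ℝ × ℝ)) (hA : A = Icc 0 l ×ˢ Icc (-W) W) :
    (∀ t : ℝ, p (t, -W) = 0) ∧ (∀ t : ℝ, p (t, W) = 1) ∧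
    (∫ q in A, Real.cosh (k * q.2)) = (2 * l / k) * Real.sinh (k * W) ∧
    (∫ q in A, ((deriv (fun t => p (t, q.2)) q.1) ^ 2 / Real.cosh (k * q.2)
        + Real.cosh (k * q.2) * (deriv (fun s => p (q.1, s)) q.2) ^ 2))
      = k * l / (h₁ (k * W) - h₁ (-(k * W))) := by
  set D := h₁ (k * W) - h₁ (-(k * W))
  have hD : 0 < D := sub_pos.2 (h₁_strictMono (by nlinarith))
  have hWW : -W ≤ W := by linarith
  have hp_t : ∀ t s, deriv (fun t => p (t, s)) t = 0 := by
    simp only [hp, deriv_const', implies_true]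
  have hp_s : ∀ t s, deriv (fun s => p (t, s)) s = k / D * (cosh (k * s))⁻¹ := fun t s => by
    simp only [hp]
    rw [(((hasDerivAt_h₁_comp_mul k s).sub_const _).div_const D).deriv]
    ring
  subst hA
  refine ⟨fun t => by simp [hp], fun t => by rw [hp, div_self hD.ne'], ?_, ?_⟩
  · rw [setIntegral_Icc_prod_Icc_comp_snd hl.le hWW (fun s => cosh (k * s)),
      integral_cosh_mul hk.ne', mul_neg, sinh_neg, sub_zero, smul_eq_mul]
    field_simp
    ring
  · calc _ = ∫ q in Icc 0 l ×ˢ Icc (-W) W, (k / D) ^ 2 * (cosh (k * q.2))⁻¹ := by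
          congr 1 with q
          rw [hp_t, hp_s]
          have := (cosh_pos (k * q.2)).ne'
          field_simp
          ring
      _ = l * ((k / D) ^ 2 * (D / k)) := by
          rw [setIntegral_Icc_prod_Icc_comp_snd hl.le hWW (fun s => (k / D) ^ 2 * (cosh (k * s))⁻¹),
            intervalIntegral.integral_const_mul, integral_inv_cosh_mul hk.ne', mul_neg, sub_zero,
            smul_eq_mul]
      _ = k * l / D := by
          field_simp
end

section
/- Let k > 0, l > 0, and let h(s) = cosh(ks) with H(s) = (1/k)·h₁(ks), h₁(x) = 2·arctan(exp(x)) (constant curvature −k²), or alternatively h(s) = cos(ks) with H(s) = (1/k)·h₂(ks), h₂(x) = log((1+sin x)/cos x), restricted to s ∈ (−π/(2k), π/(2k)) (constant curvature k²). Let a₁, a₂ : [0,l] → ℝ be continuously differentiable with a₁(t) < a₂(t) (with values in (−π/(2k), π/(2k)) in the positive-curvature case), and define p(t,s) = (H(s) − H(a₁(t))) / (H(a₂(t)) − H(a₁(t))) on A = {(t,s) : t ∈ [0,l], a₁(t) ≤ s ≤ a₂(t)}, and q_i(t) = a_i'(t)/h(a_i(t)) for i = 1,2. Then the energy of p equals ∬_A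 ( (∂_t p)²/h(s) + h(s)·(∂_s p)² ) ds dt = ∫₀ˡ ( 1 + (q₁(t)² + q₁(t)q₂(t) + q₂(t)²)/3 ) / (H(a₂(t)) − H(a₁(t))) dt. Since p equals 0 on s = a₁(t) and 1 on s = a₂(t), the capacity of the type-A annulus A is at most this integral. -/
/-!
Writing `u = H s`, the metric `h(s)² dt² + ds²` becomes `h² (dt² + du²)`, which is conformal to
the flat metric, and the Dirichlet energy of a planar domain is conformally invariant. In these
coordinates the annulus is `H (a₁ t) ≤ u ≤ H (a₂ t)` and `p` is affine in `u` on every vertical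
segment, so its energy density is `((q₁ + p (q₂ - q₁))² + 1) / D²` with `D = H (a₂ t) - H (a₁ t)`
and `qᵢ = (H ∘ aᵢ)'`. Substituting `p` for `s`, each segment contributes
`∫₀¹ ((q₁ + u (q₂ - q₁))² + 1) du / D = (1 + (q₁² + q₁ q₂ + q₂²) / 3) / D`, and Fubini sums these
contributions. Being `C¹` near the compact annulus, `p` is Lipschitz on it and so competes in the
infimum defining the capacity.
-/

open Real MeasureTheory Set
open scoped NNReal

theorem integral_sq_affine_add_one (a b : ℝ) :
    ∫ u in (0 : ℝ)..1, ((a + u * (b - a)) ^ 2 + 1) = 1 + (a ^ 2 + a * b + b ^ 2) / 3 := by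
  have hF : ∀ u ∈ uIcc (0 : ℝ) 1, HasDerivAt
      (fun u => u + a ^ 2 * u + a * (b - a) * u ^ 2 + (b - a) ^ 2 / 3 * u ^ 3)
      ((a + u * (b - a)) ^ 2 + 1) u := by
    intro u _
    have := (((hasDerivAt_id u).add ((hasDerivAt_id u).const_mul (a ^ 2))).add
      ((hasDerivAt_pow 2 u).const_mul (a * (b - a)))).add
      ((hasDerivAt_pow 3 u).const_mul ((b - a) ^ 2 / 3))
    refine this.congr_deriv ?_
    simp only [Nat.cast_ofNat]
    ring
  rw [intervalIntegral.integral_eq_sub_of_hasDerivAt hF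
    (Continuous.intervalIntegrable (by fun_prop) _ _)]
  ring

theorem IsCompact.exists_lipschitzOnWith_of_contDiffAt {E F : Type*} [NormedAddCommGroup E]
    [NormedSpace ℝ E] [NormedAddCommGroup F] [NormedSpace ℝ F] {f : E → F} {K : Set E}
    (hK : IsCompact K) (hf : ∀ x ∈ K, ContDiffAt ℝ 1 f x) : ∃ C, LipschitzOnWith C f K :=
  LocallyLipschitzOn.exists_lipschitzOnWith_of_compact hK fun x hx =>
    let ⟨C, t, ht, hC⟩ := (hf x hx).exists_lipschitzOnWith
    ⟨C, t, nhdsWithin_le_nhds ht, hC⟩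

/-- The closed counterpart of Mathlib's `regionBetween`, which uses open intervals. -/
def closedRegionBetween {α : Type*} (f g : α → ℝ) (s : Set α) : Set (α × ℝ) :=
  {p | p.1 ∈ s ∧ p.2 ∈ Icc (f p.1) (g p.1)}

section ClosedRegionBetween

variable {α : Type*} {f g : α → ℝ} {s : Set α}

theorem isCompact_closedRegionBetween [TopologicalSpace α] [T2Space α] (hf : Continuous f)
    (hg : Continuous g) (hs : IsCompact s) : IsCompact (closedRegionBetween f g s) := by
  obtain ⟨m, hm⟩ := (hs.image hf).bddBelow
  obtain ⟨M, hM⟩ := (hs.image hg).bddAbove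
  refine (hs.prod (isCompact_Icc (a := m) (b := M))).of_isClosed_subset ?_ ?_
  · exact (hs.isClosed.preimage continuous_fst).inter
      ((isClosed_le (hf.comp continuous_fst) continuous_snd).inter
        (isClosed_le continuous_snd (hg.comp continuous_fst)))
  · rintro ⟨t, y⟩ ⟨ht, hy₁, hy₂⟩
    exact ⟨ht, (hm (mem_image_of_mem f ht)).trans hy₁, hy₂.trans (hM (mem_image_of_mem g ht))⟩

theorem setIntegral_closedRegionBetween [MeasurableSpace α] {E : Type*} [NormedAddCommGroup E]
    [NormedSpace ℝ E] {μ : Measure α} [SFinite μ] (hs : MeasurableSet s)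
    (hR : MeasurableSet (closedRegionBetween f g s)) {F : α × ℝ → E}
    (hF : IntegrableOn F (closedRegionBetween f g s) (μ.prod volume)) :
    ∫ x in closedRegionBetween f g s, F x ∂μ.prod volume =
      ∫ t in s, (∫ y in Icc (f t) (g t), F (t, y)) ∂μ := by
  rw [← integral_indicator hR, integral_prod _ ((integrable_indicator_iff hR).2 hF),
    ← integral_indicator hs]
  congr 1
  funext t
  by_cases ht : t ∈ s
  · rw [indicator_of_mem ht, ← integral_indicator measurableSet_Icc]
    congr 1
    funext y
    simp only [closedRegionBetween, indicator, mem_ofPred_eq, ht, true_and]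
  · simp [closedRegionBetween, ht]

theorem Set.OrdConnected.snd_mem_of_mem_closedRegionBetween {U : Set ℝ} (hU : U.OrdConnected)
    (hf : MapsTo f s U) (hg : MapsTo g s U) {x : α × ℝ} (hx : x ∈ closedRegionBetween f g s) :
    x.2 ∈ U :=
  hU.out (hf hx.1) (hg hx.1) hx.2

end ClosedRegionBetween

/-- `t` and `H s` are isothermal coordinates for the metric `h(s)² dt² + ds²` on `ℝ × U`. -/
structure IsConformalCoordinate (h H : ℝ → ℝ) (U : Set ℝ) : Prop where
  isOpen : IsOpen U
  ordConnected : U.OrdConnected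
  continuousOn : ContinuousOn h U
  pos : ∀ s ∈ U, 0 < h s
  hasDerivAt : ∀ s ∈ U, HasDerivAt H (h s)⁻¹ s

namespace IsConformalCoordinate

variable {h H : ℝ → ℝ} {U : Set ℝ}

theorem comp_const_mul (hH : IsConformalCoordinate h H U) {k : ℝ} (hk : 0 < k) :
    IsConformalCoordinate (fun s => h (k * s)) (fun s => H (k * s) / k) ((k * ·) ⁻¹' U) where
  isOpen := hH.isOpen.preimage (continuous_const_mul k)
  ordConnected := hH.ordConnected.preimage_mono (strictMono_mul_left_of_pos hk).monotone
  continuousOn := hH.continuousOn.comp (continuous_const_mul k).continuousOn fun _ hs => hs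
  pos s hs := hH.pos _ hs
  hasDerivAt s hs := by
    refine (((hH.hasDerivAt _ hs).comp s ((hasDerivAt_id s).const_mul k)).div_const k).congr_deriv
      ?_
    simp only [mul_one]
    field_simp

theorem strictMonoOn (hH : IsConformalCoordinate h H U) : StrictMonoOn H U :=
  strictMonoOn_of_hasDerivWithinAt_pos hH.ordConnected.convex
    (fun s hs => (hH.hasDerivAt s hs).continuousAt.continuousWithinAt)
    (fun s hs => (hH.hasDerivAt s (interior_subset hs)).hasDerivWithinAt)
    (fun s hs => inv_pos.2 (hH.pos s (interior_subset hs)))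

theorem contDiffOn (hH : IsConformalCoordinate h H U) : ContDiffOn ℝ 1 H U := by
  rw [show (1 : WithTop ℕ∞) = 0 + 1 from rfl, contDiffOn_succ_iff_deriv_of_isOpen hH.isOpen]
  refine ⟨fun s hs => (hH.hasDerivAt s hs).differentiableAt.differentiableWithinAt,
    by simp, ?_⟩
  rw [contDiffOn_zero]
  exact (hH.continuousOn.inv₀ fun s hs => (hH.pos s hs).ne').congr
    fun s hs => (hH.hasDerivAt s hs).deriv

theorem hasDerivAt_comp (hH : IsConformalCoordinate h H U) {a : ℝ → ℝ} {t : ℝ}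
    (ha : DifferentiableAt ℝ a t) (hat : a t ∈ U) :
    HasDerivAt (fun t => H (a t)) (deriv a t / h (a t)) t := by
  rw [div_eq_inv_mul]
  exact (hH.hasDerivAt _ hat).comp t ha.hasDerivAt

theorem sub_ne_zero_of_lt (hH : IsConformalCoordinate h H U) {x y : ℝ} (hx : x ∈ U) (hy : y ∈ U)
    (hxy : x < y) : H y - H x ≠ 0 :=
  (sub_pos.2 (hH.strictMonoOn hx hy hxy)).ne'

theorem continuousOn_deriv_div_comp (hH : IsConformalCoordinate h H U) {a : ℝ → ℝ}
    (ha : ContDiff ℝ 1 a) {s : Set ℝ} (haU : MapsTo a s U) :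
    ContinuousOn (fun t => deriv a t / h (a t)) s :=
  (ha.continuous_deriv le_rfl).continuousOn.div
    (hH.continuousOn.comp ha.continuous.continuousOn haU) fun _ ht => (hH.pos _ (haU ht)).ne'

end IsConformalCoordinate

theorem isConformalCoordinate_cosh :
    IsConformalCoordinate cosh (fun x => 2 * arctan (exp x)) univ where
  isOpen := isOpen_univ
  ordConnected := ordConnected_univ
  continuousOn := continuous_cosh.continuousOn
  pos x _ := cosh_pos x
  hasDerivAt x _ := by
    refine (((hasDerivAt_arctan _).comp x (hasDerivAt_exp x)).const_mul 2).congr_deriv ?_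
    rw [cosh_eq, exp_neg]
    field_simp
    ring

theorem isConformalCoordinate_cos :
    IsConformalCoordinate cos (fun x => log ((1 + sin x) / cos x)) (Ioo (-(π / 2)) (π / 2)) where
  isOpen := isOpen_Ioo
  ordConnected := ordConnected_Ioo
  continuousOn := continuous_cos.continuousOn
  pos x hx := cos_pos_of_mem_Ioo hx
  hasDerivAt x hx := by
    have hcos : 0 < cos x := cos_pos_of_mem_Ioo hx
    have hsin : 0 < 1 + sin x := by
      have := sin_lt_sin_of_lt_of_le_pi_div_two (le_refl _) hx.2.le hx.1
      rw [sin_neg, sin_pi_div_two] at this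
      linarith
    refine ((((hasDerivAt_sin x).const_add 1).div (hasDerivAt_cos x) hcos.ne').log
      (div_pos hsin hcos).ne').congr_deriv ?_
    simp only [Pi.div_apply]
    field_simp
    linear_combination sin_sq_add_cos_sq x

theorem mul_mem_Ioo_neg_pi_div_two {k s : ℝ} (hk : 0 < k) (h₁ : -(π / (2 * k)) < s)
    (h₂ : s < π / (2 * k)) : k * s ∈ Ioo (-(π / 2)) (π / 2) := by
  rw [← div_div, ← neg_div, div_lt_iff₀' hk] at h₁
  rw [← div_div, lt_div_iff₀' hk] at h₂
  exact ⟨h₁, h₂⟩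

noncomputable def energyDensity (h : ℝ → ℝ) (f : ℝ × ℝ → ℝ) (x : ℝ × ℝ) : ℝ :=
  (deriv (fun t => f (t, x.2)) x.1) ^ 2 / h x.2 + h x.2 * (deriv (fun s => f (x.1, s)) x.2) ^ 2

noncomputable def conformalInterpolant (H a₁ a₂ : ℝ → ℝ) (x : ℝ × ℝ) : ℝ :=
  (H x.2 - H (a₁ x.1)) / (H (a₂ x.1) - H (a₁ x.1))

theorem energyDensity_nonneg {h : ℝ → ℝ} (f : ℝ × ℝ → ℝ) {x : ℝ × ℝ} (hx : 0 ≤ h x.2) :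
    0 ≤ energyDensity h f x := by
  unfold energyDensity
  positivity

theorem conformalInterpolant_lower (H a₁ a₂ : ℝ → ℝ) (t : ℝ) :
    conformalInterpolant H a₁ a₂ (t, a₁ t) = 0 := by
  simp [conformalInterpolant]

theorem conformalInterpolant_upper {H a₁ a₂ : ℝ → ℝ} {t : ℝ} (hD : H (a₂ t) - H (a₁ t) ≠ 0) :
    conformalInterpolant H a₁ a₂ (t, a₂ t) = 1 :=
  div_self hD

section

variable {H a₁ a₂ : ℝ → ℝ} {q₁ q₂ t : ℝ}

theorem hasDerivAt_conformalInterpolant_fst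
    (hq₁ : HasDerivAt (fun t => H (a₁ t)) q₁ t) (hq₂ : HasDerivAt (fun t => H (a₂ t)) q₂ t)
    (hD : H (a₂ t) - H (a₁ t) ≠ 0) (s : ℝ) :
    HasDerivAt (fun t => conformalInterpolant H a₁ a₂ (t, s))
      (-(q₁ + conformalInterpolant H a₁ a₂ (t, s) * (q₂ - q₁)) / (H (a₂ t) - H (a₁ t))) t := by
  refine ((hq₁.const_sub (H s)).div (hq₂.sub hq₁) hD).congr_deriv ?_
  simp only [conformalInterpolant, Pi.sub_apply]
  field_simp
  ring

end

namespace IsConformalCoordinate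

variable {h H : ℝ → ℝ} {U : Set ℝ} {a₁ a₂ : ℝ → ℝ}

section

variable {q₁ q₂ t : ℝ}

theorem hasDerivAt_conformalInterpolant_snd
    (hH : IsConformalCoordinate h H U) {s : ℝ} (hs : s ∈ U) :
    HasDerivAt (fun s => conformalInterpolant H a₁ a₂ (t, s))
      ((h s)⁻¹ / (H (a₂ t) - H (a₁ t))) s :=
  ((hH.hasDerivAt s hs).sub_const (H (a₁ t))).div_const (H (a₂ t) - H (a₁ t))

theorem energyDensity_conformalInterpolant
    (hH : IsConformalCoordinate h H U) (hq₁ : HasDerivAt (fun t => H (a₁ t)) q₁ t)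
    (hq₂ : HasDerivAt (fun t => H (a₂ t)) q₂ t) (hD : H (a₂ t) - H (a₁ t) ≠ 0)
    {s : ℝ} (hs : s ∈ U) :
    energyDensity h (conformalInterpolant H a₁ a₂) (t, s) =
      ((q₁ + conformalInterpolant H a₁ a₂ (t, s) * (q₂ - q₁)) ^ 2 + 1) *
        ((h s)⁻¹ / (H (a₂ t) - H (a₁ t))) / (H (a₂ t) - H (a₁ t)) := by
  have hh := (hH.pos s hs).ne'
  rw [energyDensity, (hasDerivAt_conformalInterpolant_fst hq₁ hq₂ hD s).deriv,
    (hH.hasDerivAt_conformalInterpolant_snd hs).deriv]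
  field_simp

theorem integral_energyDensity_conformalInterpolant_snd
    (hH : IsConformalCoordinate h H U) (h₁ : a₁ t ∈ U) (h₂ : a₂ t ∈ U) (h₁₂ : a₁ t < a₂ t)
    (hq₁ : HasDerivAt (fun t => H (a₁ t)) q₁ t) (hq₂ : HasDerivAt (fun t => H (a₂ t)) q₂ t) :
    ∫ s in a₁ t..a₂ t, energyDensity h (conformalInterpolant H a₁ a₂) (t, s) =
      (1 + (q₁ ^ 2 + q₁ * q₂ + q₂ ^ 2) / 3) / (H (a₂ t) - H (a₁ t)) := by
  have hD : H (a₂ t) - H (a₁ t) ≠ 0 := hH.sub_ne_zero_of_lt h₁ h₂ h₁₂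
  have hsub : uIcc (a₁ t) (a₂ t) ⊆ U := by
    rw [uIcc_of_le h₁₂.le]; exact hH.ordConnected.out h₁ h₂
  let P s := conformalInterpolant H a₁ a₂ (t, s)
  calc ∫ s in a₁ t..a₂ t, energyDensity h (conformalInterpolant H a₁ a₂) (t, s)
      = (∫ s in a₁ t..a₂ t, ((fun u => (q₁ + u * (q₂ - q₁)) ^ 2 + 1) ∘ P) s *
          ((h s)⁻¹ / (H (a₂ t) - H (a₁ t)))) / (H (a₂ t) - H (a₁ t)) := by
        rw [← intervalIntegral.integral_div]
        exact intervalIntegral.integral_congr fun s hs =>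
          hH.energyDensity_conformalInterpolant hq₁ hq₂ hD (hsub hs)
    _ = (∫ u in P (a₁ t)..P (a₂ t), ((q₁ + u * (q₂ - q₁)) ^ 2 + 1)) / (H (a₂ t) - H (a₁ t)) := by
        rw [intervalIntegral.integral_comp_mul_deriv
          (fun s hs => hH.hasDerivAt_conformalInterpolant_snd (hsub hs))
          (((hH.continuousOn.mono hsub).inv₀ fun s hs => (hH.pos s (hsub hs)).ne').div_const _)
          (by fun_prop)]
    _ = _ := by
        rw [show P (a₁ t) = 0 from conformalInterpolant_lower H a₁ a₂ t,
          show P (a₂ t) = 1 from conformalInterpolant_upper hD, integral_sq_affine_add_one]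

theorem contDiffAt_conformalInterpolant (hH : IsConformalCoordinate h H U) {t s : ℝ}
    (ha₁ : ContDiffAt ℝ 1 a₁ t) (ha₂ : ContDiffAt ℝ 1 a₂ t) (h₁ : a₁ t ∈ U) (h₂ : a₂ t ∈ U)
    (h₁₂ : a₁ t < a₂ t) (hs : s ∈ U) :
    ContDiffAt ℝ 1 (conformalInterpolant H a₁ a₂) (t, s) := by
  have hC : ∀ y ∈ U, ContDiffAt ℝ 1 H y := fun y hy =>
    hH.contDiffOn.contDiffAt (hH.isOpen.mem_nhds hy)
  have hH₁ := (hC _ h₁).comp (t, s) (ha₁.comp (t, s) contDiffAt_fst)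
  have hH₂ := (hC _ h₂).comp (t, s) (ha₂.comp (t, s) contDiffAt_fst)
  exact (((hC s hs).comp (t, s) contDiffAt_snd).sub hH₁).div (hH₂.sub hH₁)
    (hH.sub_ne_zero_of_lt h₁ h₂ h₁₂)

end

section

variable {q₁ q₂ : ℝ → ℝ} {l : ℝ}

theorem integrableOn_energyDensity_conformalInterpolant (hH : IsConformalCoordinate h H U)
    (ha₁ : Continuous a₁) (ha₂ : Continuous a₂) (h₁ : MapsTo a₁ (Icc 0 l) U)
    (h₂ : MapsTo a₂ (Icc 0 l) U) (h₁₂ : ∀ t ∈ Icc 0 l, a₁ t < a₂ t)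
    (hq₁ : ∀ t ∈ Icc 0 l, HasDerivAt (fun t => H (a₁ t)) (q₁ t) t)
    (hq₂ : ∀ t ∈ Icc 0 l, HasDerivAt (fun t => H (a₂ t)) (q₂ t) t)
    (hq₁c : ContinuousOn q₁ (Icc 0 l)) (hq₂c : ContinuousOn q₂ (Icc 0 l)) :
    IntegrableOn (energyDensity h (conformalInterpolant H a₁ a₂))
      (closedRegionBetween a₁ a₂ (Icc 0 l)) := by
  set R := closedRegionBetween a₁ a₂ (Icc 0 l)
  have hRc : IsCompact R := isCompact_closedRegionBetween ha₁ ha₂ isCompact_Icc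
  have hsnd : MapsTo Prod.snd R U := fun x hx =>
    hH.ordConnected.snd_mem_of_mem_closedRegionBetween h₁ h₂ hx
  have hD : ∀ x ∈ R, H (a₂ x.1) - H (a₁ x.1) ≠ 0 := fun x hx =>
    hH.sub_ne_zero_of_lt (h₁ hx.1) (h₂ hx.1) (h₁₂ x.1 hx.1)
  have hfst {q : ℝ → ℝ} (hq : ContinuousOn q (Icc 0 l)) : ContinuousOn (fun x => q x.1) R :=
    hq.comp continuous_fst.continuousOn fun x hx => hx.1
  have cH₁ := hfst fun t ht => (hq₁ t ht).continuousAt.continuousWithinAt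
  have cH₂ := hfst fun t ht => (hq₂ t ht).continuousAt.continuousWithinAt
  have cH : ContinuousOn (fun x : ℝ × ℝ => H x.2) R :=
    hH.contDiffOn.continuousOn.comp continuous_snd.continuousOn hsnd
  have ch : ContinuousOn (fun x : ℝ × ℝ => (h x.2)⁻¹) R :=
    (hH.continuousOn.comp continuous_snd.continuousOn hsnd).inv₀ fun _ hx =>
      (hH.pos _ (hsnd hx)).ne'
  have cP : ContinuousOn (conformalInterpolant H a₁ a₂) R := (cH.sub cH₁).div (cH₂.sub cH₁) hD
  have cG : ContinuousOn (fun x => ((q₁ x.1 + conformalInterpolant H a₁ a₂ x * (q₂ x.1 - q₁ x.1))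
      ^ 2 + 1) * ((h x.2)⁻¹ / (H (a₂ x.1) - H (a₁ x.1))) / (H (a₂ x.1) - H (a₁ x.1))) R :=
    ((((hfst hq₁c).add (cP.mul ((hfst hq₂c).sub (hfst hq₁c)))).pow 2).add continuousOn_const
      |>.mul (ch.div (cH₂.sub cH₁) hD)).div (cH₂.sub cH₁) hD
  refine (cG.integrableOn_compact hRc).congr_fun (fun x hx => ?_) hRc.isClosed.measurableSet
  exact (hH.energyDensity_conformalInterpolant (hq₁ x.1 hx.1) (hq₂ x.1 hx.1) (hD x hx)
    (hsnd hx)).symm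

theorem integral_energyDensity_conformalInterpolant (hH : IsConformalCoordinate h H U)
    (ha₁ : Continuous a₁) (ha₂ : Continuous a₂) (hl : 0 ≤ l) (h₁ : MapsTo a₁ (Icc 0 l) U)
    (h₂ : MapsTo a₂ (Icc 0 l) U) (h₁₂ : ∀ t ∈ Icc 0 l, a₁ t < a₂ t)
    (hq₁ : ∀ t ∈ Icc 0 l, HasDerivAt (fun t => H (a₁ t)) (q₁ t) t)
    (hq₂ : ∀ t ∈ Icc 0 l, HasDerivAt (fun t => H (a₂ t)) (q₂ t) t)
    (hq₁c : ContinuousOn q₁ (Icc 0 l)) (hq₂c : ContinuousOn q₂ (Icc 0 l)) :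
    ∫ x in closedRegionBetween a₁ a₂ (Icc 0 l), energyDensity h (conformalInterpolant H a₁ a₂) x =
      ∫ t in (0 : ℝ)..l, (1 + (q₁ t ^ 2 + q₁ t * q₂ t + q₂ t ^ 2) / 3) / (H (a₂ t) - H (a₁ t)) := by
  have hint := hH.integrableOn_energyDensity_conformalInterpolant ha₁ ha₂ h₁ h₂ h₁₂ hq₁ hq₂
    hq₁c hq₂c
  rw [Measure.volume_eq_prod] at hint ⊢
  rw [setIntegral_closedRegionBetween measurableSet_Icc
    (isCompact_closedRegionBetween ha₁ ha₂ isCompact_Icc).isClosed.measurableSet hint,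
    intervalIntegral.integral_of_le hl, ← integral_Icc_eq_integral_Ioc]
  refine setIntegral_congr_fun measurableSet_Icc fun t ht => ?_
  rw [integral_Icc_eq_integral_Ioc, ← intervalIntegral.integral_of_le (h₁₂ t ht).le]
  exact hH.integral_energyDensity_conformalInterpolant_snd (h₁ ht) (h₂ ht) (h₁₂ t ht)
    (hq₁ t ht) (hq₂ t ht)

theorem exists_lipschitzOnWith_conformalInterpolant (hH : IsConformalCoordinate h H U)
    (ha₁ : ContDiff ℝ 1 a₁) (ha₂ : ContDiff ℝ 1 a₂) (h₁ : MapsTo a₁ (Icc 0 l) U)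
    (h₂ : MapsTo a₂ (Icc 0 l) U) (h₁₂ : ∀ t ∈ Icc 0 l, a₁ t < a₂ t) :
    ∃ C, LipschitzOnWith C (conformalInterpolant H a₁ a₂) (closedRegionBetween a₁ a₂ (Icc 0 l)) :=
  (isCompact_closedRegionBetween ha₁.continuous ha₂.continuous isCompact_Icc)
    |>.exists_lipschitzOnWith_of_contDiffAt fun x hx =>
      hH.contDiffAt_conformalInterpolant ha₁.contDiffAt ha₂.contDiffAt (h₁ hx.1) (h₂ hx.1)
        (h₁₂ x.1 hx.1) (hH.ordConnected.snd_mem_of_mem_closedRegionBetween h₁ h₂ hx)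

theorem setIntegral_energyDensity_nonneg (hH : IsConformalCoordinate h H U)
    (ha₁ : Continuous a₁) (ha₂ : Continuous a₂) (h₁ : MapsTo a₁ (Icc 0 l) U)
    (h₂ : MapsTo a₂ (Icc 0 l) U) (f : ℝ × ℝ → ℝ) :
    0 ≤ ∫ x in closedRegionBetween a₁ a₂ (Icc 0 l), energyDensity h f x :=
  setIntegral_nonneg (isCompact_closedRegionBetween ha₁ ha₂ isCompact_Icc).measurableSet
    fun _ hx => energyDensity_nonneg f
      (hH.pos _ (hH.ordConnected.snd_mem_of_mem_closedRegionBetween h₁ h₂ hx)).le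

end

end IsConformalCoordinate

/-- upper bound for the capacity of an annulus of type A on a
cylinder of constant curvature `-k²` (`h = cosh (k·)`, `H = h₁ (k·)/k` with
`h₁ x = 2 arctan (exp x)`) or `k²` (`h = cos (k·)`, `H = h₂ (k·)/k` with
`h₂ x = log ((1+sin x)/cos x)`, everything inside `(-π/(2k), π/(2k))`): the test
function `p (t,s) = (H s - H (a₁ t)) / (H (a₂ t) - H (a₁ t))` has boundary
values `0` and `1`, its energy equals
`∫₀ˡ (1 + (q₁² + q₁q₂ + q₂²)/3) / (H (a₂ t) - H (a₁ t)) dt` with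
`qᵢ = aᵢ' / h (aᵢ)`, and hence the capacity of the annulus is at most this
integral. -/
theorem capacity_upper_bound_typeA
    (k l : ℝ) (hk : 0 < k) (hl : 0 < l)
    (h H : ℝ → ℝ) (a₁ a₂ : ℝ → ℝ)
    (hd₁ : ContDiff ℝ 1 a₁) (hd₂ : ContDiff ℝ 1 a₂)
    (h₁₂ : ∀ t ∈ Icc (0 : ℝ) l, a₁ t < a₂ t)
    (hcase :
      ((∀ s : ℝ, h s = Real.cosh (k * s)) ∧
        (∀ s : ℝ, H s = (2 * Real.arctan (Real.exp (k * s))) / k)) ∨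
      ((∀ s : ℝ, h s = Real.cos (k * s)) ∧
        (∀ s : ℝ, H s = Real.log ((1 + Real.sin (k * s)) / Real.cos (k * s)) / k) ∧
        (∀ t ∈ Icc (0 : ℝ) l, -(π / (2 * k)) < a₁ t ∧ a₂ t < π / (2 * k))))
    (p : ℝ × ℝ → ℝ)
    (hp : ∀ t s : ℝ, p (t, s) = (H s - H (a₁ t)) / (H (a₂ t) - H (a₁ t)))
    (q₁ q₂ : ℝ → ℝ)
    (hq₁ : ∀ t : ℝ, q₁ t = deriv a₁ t / h (a₁ t))
    (hq₂ : ∀ t : ℝ, q₂ t = deriv a₂ t / h (a₂ t))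
    (A : Set (ℝ × ℝ))
    (hA : A = {x : ℝ × ℝ | x.1 ∈ Icc (0 : ℝ) l ∧ x.2 ∈ Icc (a₁ x.1) (a₂ x.1)}) :
    (∀ t ∈ Icc (0 : ℝ) l, p (t, a₁ t) = 0 ∧ p (t, a₂ t) = 1) ∧
    (∫ x in A, ((deriv (fun t => p (t, x.2)) x.1) ^ 2 / h x.2
        + h x.2 * (deriv (fun s => p (x.1, s)) x.2) ^ 2))
      = (∫ t in (0 : ℝ)..l,
          (1 + (q₁ t ^ 2 + q₁ t * q₂ t + q₂ t ^ 2) / 3) / (H (a₂ t) - H (a₁ t))) ∧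
    sInf {E : ℝ | ∃ f : ℝ × ℝ → ℝ, (∃ C : ℝ≥0, LipschitzOnWith C f A) ∧
        (∀ t ∈ Icc (0 : ℝ) l, f (t, a₁ t) = 0 ∧ f (t, a₂ t) = 1) ∧
        E = ∫ x in A, ((deriv (fun t => f (t, x.2)) x.1) ^ 2 / h x.2
          + h x.2 * (deriv (fun s => f (x.1, s)) x.2) ^ 2)} ≤
      ∫ t in (0 : ℝ)..l,
        (1 + (q₁ t ^ 2 + q₁ t * q₂ t + q₂ t ^ 2) / 3) / (H (a₂ t) - H (a₁ t)) := by
  obtain ⟨U, hH, h₁, h₂⟩ : ∃ U, IsConformalCoordinate h H U ∧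
      MapsTo a₁ (Icc 0 l) U ∧ MapsTo a₂ (Icc 0 l) U := by
    rcases hcase with ⟨hh, hH⟩ | ⟨hh, hH, hstrip⟩
    · rw [funext hh, funext hH]
      exact ⟨_, isConformalCoordinate_cosh.comp_const_mul hk, mapsTo_univ _ _, mapsTo_univ _ _⟩
    · rw [funext hh, funext hH]
      refine ⟨_, isConformalCoordinate_cos.comp_const_mul hk, fun t ht => ?_, fun t ht => ?_⟩
      · exact mul_mem_Ioo_neg_pi_div_two hk (hstrip t ht).1 ((h₁₂ t ht).trans (hstrip t ht).2)
      · exact mul_mem_Ioo_neg_pi_div_two hk ((hstrip t ht).1.trans (h₁₂ t ht)) (hstrip t ht).2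
  obtain rfl : p = conformalInterpolant H a₁ a₂ := funext fun x => hp x.1 x.2
  obtain rfl : A = closedRegionBetween a₁ a₂ (Icc 0 l) := hA
  have hbdry : ∀ t ∈ Icc (0 : ℝ) l, conformalInterpolant H a₁ a₂ (t, a₁ t) = 0 ∧
      conformalInterpolant H a₁ a₂ (t, a₂ t) = 1 := fun t ht =>
    ⟨conformalInterpolant_lower H a₁ a₂ t,
      conformalInterpolant_upper (hH.sub_ne_zero_of_lt (h₁ ht) (h₂ ht) (h₁₂ t ht))⟩
  have henergy := hH.integral_energyDensity_conformalInterpolant hd₁.continuous hd₂.continuous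
    hl.le h₁ h₂ h₁₂
    (fun t ht => hq₁ t ▸ hH.hasDerivAt_comp (hd₁.differentiable one_ne_zero t) (h₁ ht))
    (fun t ht => hq₂ t ▸ hH.hasDerivAt_comp (hd₂.differentiable one_ne_zero t) (h₂ ht))
    (funext hq₁ ▸ hH.continuousOn_deriv_div_comp hd₁ h₁)
    (funext hq₂ ▸ hH.continuousOn_deriv_div_comp hd₂ h₂)
  obtain ⟨C, hC⟩ := hH.exists_lipschitzOnWith_conformalInterpolant hd₁ hd₂ h₁ h₂ h₁₂
  refine ⟨hbdry, henergy, csInf_le ⟨0, ?_⟩ ⟨_, ⟨C, hC⟩, hbdry, henergy.symm⟩⟩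
  rintro E ⟨f, -, -, rfl⟩
  exact hH.setIntegral_energyDensity_nonneg hd₁.continuous hd₂.continuous h₁ h₂ f
end
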